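/- arXiv:2107.00051 — 2 statements merged into one kernel-verified Lean document; each statement's English description precedes it below -/
import Mathlib

section
/- For two probability vectors p, q in ℝ^C (nonnegative entries summing to 1) with all entries of q bounded below by δ > 0, the Kullback–Leibler divergence satisfies KL(p ‖ q) = Σ_j p_j log(p_j / q_j) ≤ ‖p − q‖² / δ, where ‖·‖ is the Euclidean norm. -/
open Real Finset

/-- For probability vectors `p q : Fin C → ℝ` with coordinates of `q`
bounded below by `δ > 0`, `KL(p‖q) = ∑ j, p j * log (p j / q j) ≤ ‖p - q‖² / δ`
(Euclidean norm). -/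
theorem kl_le_sq_norm_div_delta (C : ℕ) (p q : Fin C → ℝ) (δ : ℝ) (hδ : 0 < δ)
    (hp0 : ∀ j, 0 ≤ p j) (hp1 : ∑ j, p j = 1)
    (hq0 : ∀ j, δ ≤ q j) (hq1 : ∑ j, q j = 1) :
    ∑ j, p j * Real.log (p j / q j) ≤ (∑ j, (p j - q j) ^ 2) / δ := by
  have key : ∀ j, p j * Real.log (p j / q j) ≤ (p j - q j) + (p j - q j) ^ 2 / δ := by
    intro j
    have hq : 0 < q j := lt_of_lt_of_le hδ (hq0 j)
    rcases eq_or_lt_of_le (hp0 j) with h | h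
    · rw [← h]
      have h1 : q j ≤ q j ^ 2 / δ := by
        rw [le_div_iff₀ hδ]; nlinarith [hq0 j]
      simp only [zero_mul, zero_sub, neg_sq]
      linarith
    · have hpq : 0 < p j / q j := div_pos h hq
      have hlog := Real.log_le_sub_one_of_pos hpq
      have h1 : p j * Real.log (p j / q j) ≤ p j * (p j / q j - 1) :=
        mul_le_mul_of_nonneg_left hlog (hp0 j)
      have h2 : p j * (p j / q j - 1) = (p j - q j) + (p j - q j) ^ 2 / q j := by
        field_simp; ring
      have h3 : (p j - q j) ^ 2 / q j ≤ (p j - q j) ^ 2 / δ :=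
        div_le_div_of_nonneg_left (sq_nonneg _) hδ (hq0 j)
      linarith
  calc ∑ j, p j * Real.log (p j / q j)
      ≤ ∑ j, ((p j - q j) + (p j - q j) ^ 2 / δ) :=
        Finset.sum_le_sum fun j _ => key j
    _ = (∑ j, (p j - q j)) + ∑ j, (p j - q j) ^ 2 / δ := Finset.sum_add_distrib
    _ = (∑ j, (p j - q j) ^ 2) / δ := by
        rw [Finset.sum_sub_distrib, hp1, hq1, Finset.sum_div]; ring
end

section
/- The softmax function σ : ℝ^C → ℝ^C, defined by σ(x)_j = exp(x_j)/Σ_k exp(x_k), is 1-Lipschitz with respect to the Euclidean norm. -/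
/-!
The Jacobian of softmax at `x` is `diag p - p pᵀ` with `p = softmax x`, which sends `v` to
`(pᵢ (vᵢ - ⟨p, v⟩))ᵢ`. Since `0 ≤ pᵢ ≤ 1`, the squared norm of this vector is at most the
`p`-weighted variance `∑ pᵢ (vᵢ - ⟨p, v⟩)²`, which is at most the second moment `∑ pᵢ vᵢ² ≤ ‖v‖²`.
So the Jacobian has operator norm at most `1` everywhere, and the mean value inequality concludes.
-/

open Real Finset

/-- The softmax function on `ℝ^C` (with the Euclidean norm). -/
noncomputable def softmax (C : ℕ) (x : EuclideanSpace ℝ (Fin C)) :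
    EuclideanSpace ℝ (Fin C) :=
  WithLp.toLp 2 (fun j => Real.exp (x j) / ∑ k, Real.exp (x k))

open Matrix

section SoftmaxJacobian

variable {ι : Type*} [Fintype ι]

def softmaxJacobian [DecidableEq ι] (p : ι → ℝ) : Matrix ι ι ℝ :=
  diagonal p - vecMulVec p p

lemma softmaxJacobian_mulVec [DecidableEq ι] (p v : ι → ℝ) :
    softmaxJacobian p *ᵥ v = fun i => p i * (v i - p ⬝ᵥ v) := by
  ext i
  simp only [softmaxJacobian, sub_mulVec, vecMulVec_mulVec, op_smul_eq_smul, Pi.sub_apply,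
    mulVec_diagonal, Pi.smul_apply, smul_eq_mul]
  ring

lemma sum_sq_mul_sub_dotProduct_le {p : ι → ℝ} (hp : ∀ i, 0 ≤ p i) (hp_sum : ∑ i, p i ≤ 1)
    (v : ι → ℝ) : ∑ i, (p i * (v i - p ⬝ᵥ v)) ^ 2 ≤ ∑ i, v i ^ 2 := by
  set s := p ⬝ᵥ v
  have hp_le_one (i : ι) : p i ≤ 1 := (single_le_sum (fun j _ => hp j) (mem_univ i)).trans hp_sum
  have hvariance :
      ∑ i, p i * (v i - s) ^ 2 = ∑ i, p i * v i ^ 2 - 2 * s ^ 2 + s ^ 2 * ∑ i, p i :=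
    calc ∑ i, p i * (v i - s) ^ 2 = ∑ i, (p i * v i ^ 2 - 2 * s * (p i * v i) + s ^ 2 * p i) :=
          sum_congr rfl fun i _ => by ring
      _ = _ := by
          rw [sum_add_distrib, sum_sub_distrib, ← mul_sum, ← mul_sum]
          change _ - 2 * s * s + _ = _
          ring
  calc ∑ i, (p i * (v i - s)) ^ 2 ≤ ∑ i, p i * (v i - s) ^ 2 := sum_le_sum fun i _ => by
        rw [mul_pow]
        exact mul_le_mul_of_nonneg_right (pow_le_of_le_one (hp i) (hp_le_one i) two_ne_zero)
          (sq_nonneg _)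
    _ = ∑ i, p i * v i ^ 2 - 2 * s ^ 2 + s ^ 2 * ∑ i, p i := hvariance
    _ ≤ ∑ i, p i * v i ^ 2 := by nlinarith [sq_nonneg s]
    _ ≤ ∑ i, v i ^ 2 := sum_le_sum fun i _ => mul_le_of_le_one_left (sq_nonneg _) (hp_le_one i)

lemma norm_toEuclideanCLM_softmaxJacobian_le [DecidableEq ι] {p : ι → ℝ} (hp : ∀ i, 0 ≤ p i)
    (hp_sum : ∑ i, p i ≤ 1) : ‖toEuclideanCLM (𝕜 := ℝ) (softmaxJacobian p)‖ ≤ 1 := by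
  refine ContinuousLinearMap.opNorm_le_bound _ zero_le_one fun v => ?_
  rw [one_mul, ← sq_le_sq₀ (norm_nonneg _) (norm_nonneg _), EuclideanSpace.real_norm_sq_eq,
    EuclideanSpace.real_norm_sq_eq]
  simpa [softmaxJacobian_mulVec] using sum_sq_mul_sub_dotProduct_le hp hp_sum v

end SoftmaxJacobian

lemma softmax_apply (C : ℕ) (x : EuclideanSpace ℝ (Fin C)) (j : Fin C) :
    softmax C x j = exp (x j) / ∑ k, exp (x k) := rfl

lemma softmax_nonneg (C : ℕ) (x : EuclideanSpace ℝ (Fin C)) (j : Fin C) : 0 ≤ softmax C x j :=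
  div_nonneg (exp_pos _).le (sum_nonneg fun _ _ => (exp_pos _).le)

lemma sum_softmax_le_one (C : ℕ) (x : EuclideanSpace ℝ (Fin C)) : ∑ j, softmax C x j ≤ 1 := by
  simp_rw [softmax_apply, ← sum_div]
  exact div_le_one_of_le₀ le_rfl (sum_nonneg fun _ _ => (exp_pos _).le)

lemma hasFDerivAt_softmax (C : ℕ) (x : EuclideanSpace ℝ (Fin C)) :
    HasFDerivAt (softmax C) (toEuclideanCLM (𝕜 := ℝ) (softmaxJacobian (softmax C x))) x := by
  rw [← hasFDerivWithinAt_univ, hasFDerivWithinAt_euclidean]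
  intro j
  have hS : ∑ k, exp (x k) ≠ 0 := (sum_pos (fun _ _ => exp_pos _) ⟨j, mem_univ j⟩).ne'
  have hexp (k : Fin C) : HasFDerivAt (fun y : EuclideanSpace ℝ (Fin C) => exp (y k))
      (exp (x k) • PiLp.proj 2 _ k) x :=
    (PiLp.hasFDerivAt_apply 2 x k).exp
  have hinv := (hasDerivAt_inv hS).comp_hasFDerivAt x (HasFDerivAt.fun_sum fun k _ => hexp k)
  refine ((hexp j).mul hinv).hasFDerivWithinAt.congr_fderiv ?_
  ext w
  simp only [neg_smul, smul_neg, Function.comp_apply, _root_.add_apply,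
    _root_.neg_apply, _root_.smul_apply, _root_.sum_apply,
    PiLp.proj_apply, smul_eq_mul, ContinuousLinearMap.comp_apply, ofLp_toEuclideanCLM,
    softmaxJacobian_mulVec, softmax_apply, dotProduct]
  simp_rw [div_mul_eq_mul_div, ← sum_div]
  field_simp
  ring

/-- softmax is 1-Lipschitz with respect to the Euclidean norm. -/
theorem softmax_lipschitz (C : ℕ) : LipschitzWith 1 (softmax C) := by
  refine lipschitzWith_of_nnnorm_fderiv_le (𝕜 := ℝ)
    (fun x => (hasFDerivAt_softmax C x).differentiableAt) fun x => ?_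
  rw [(hasFDerivAt_softmax C x).fderiv, ← NNReal.coe_le_coe]
  exact norm_toEuclideanCLM_softmaxJacobian_le (softmax_nonneg C x) (sum_softmax_le_one C x)
end
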